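/- For all n ≥ 6, every permutation π of {1,…,n} with π_{n−1} = n and π_n = 3 (i.e., π ends with the suffix n,3) satisfies ssc(π) = n−3. -/

import Mathlib

/-! If `π = β·m·3` is a permutation of `{1, …, m}`, then `S π = S(β)·3·m`, and `S β` ends with
the largest letter of `β`. For `m ≥ 5` that letter is `m - 1`, so `S π = γ·(m-1)·3·m`, where
`γ·(m-1)·3` has the same shape one size smaller, and `m` stays in place under every further pass.
After `m - 4` passes one reaches `β'·4·3·5⋯m` with `β'` a permutation of `{1, 2}`, which the
next pass sorts, while each earlier word contains the descent `(m - j)·3`. -/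

/-- The largest letter of a word (`0` for the empty word). -/
def listMax (l : List ℕ) : ℕ := l.foldr max 0

lemma listMax_mem {l : List ℕ} (h : l ≠ []) : listMax l ∈ l := by
  induction l with
  | nil => simp at h
  | cons a t ih =>
    rcases eq_or_ne t [] with rfl | ht
    · simp [listMax]
    · have ht' := ih ht
      have hcons : listMax (a :: t) = max a (listMax t) := rfl
      rcases le_total a (listMax t) with hle | hle
      · rw [hcons, max_eq_right hle]; exact List.mem_cons_of_mem _ ht'
      · rw [hcons, max_eq_left hle]; exact List.mem_cons_self

/-- The stack-sorting operator `S`: `S` of the empty word is the empty word, and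
if `π` is nonempty, writing `π = L·m·R` where `m` is the greatest letter of `π`,
then `S(π) = S(L)·S(R)·m`. -/
def stackSort : List ℕ → List ℕ
  | [] => []
  | x :: xs =>
    stackSort ((x :: xs).take ((x :: xs).idxOf (listMax (x :: xs)))) ++
      stackSort ((x :: xs).drop ((x :: xs).idxOf (listMax (x :: xs)) + 1)) ++
      [listMax (x :: xs)]
termination_by l => l.length
decreasing_by
  · have hm : listMax (x :: xs) ∈ x :: xs := listMax_mem (by simp)
    have hi : (x :: xs).idxOf (listMax (x :: xs)) < (x :: xs).length :=
      List.idxOf_lt_length_iff.mpr hm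
    simp only [List.length_take, List.length_cons] at *
    omega
  · simp only [List.length_drop, List.length_cons]
    omega

/-- `π` is a permutation of `{1, …, n}`, viewed as a word containing each of
`1, …, n` exactly once. -/
def IsPermWord (n : ℕ) (π : List ℕ) : Prop := π.Perm (List.range' 1 n)

/-- The stack-sorting complexity of `π`: the least `k ≥ 0` such that `S^k(π)`
is the identity word `1, 2, …, n` (where `n` is the length of `π`). -/
noncomputable def ssc (π : List ℕ) : ℕ :=
  sInf {k : ℕ | stackSort^[k] π = List.range' 1 π.length}

lemma listMax_eq_of_mem {l : List ℕ} {m : ℕ} (hm : m ∈ l) (h : ∀ a ∈ l, a ≤ m) :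
    listMax l = m :=
  le_antisymm (List.max_le_of_forall_le l m h) (List.le_max_of_le hm le_rfl)

lemma stackSort_of_ne_nil {l : List ℕ} (h : l ≠ []) :
    stackSort l = stackSort (l.take (l.idxOf (listMax l))) ++
      stackSort (l.drop (l.idxOf (listMax l) + 1)) ++ [listMax l] := by
  obtain ⟨x, xs, rfl⟩ := List.exists_cons_of_ne_nil h
  rw [stackSort]

lemma stackSort_perm (l : List ℕ) : (stackSort l).Perm l := by
  induction l using stackSort.induct with
  | case1 => rw [stackSort]
  | case2 x xs ihL ihR =>
    set l := x :: xs
    set i := l.idxOf (listMax l)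
    have hi : i < l.length := List.idxOf_lt_length_iff.mpr (listMax_mem (List.cons_ne_nil x xs))
    have hsplit : l.take i ++ listMax l :: l.drop (i + 1) = l := by
      conv_rhs => rw [← List.take_append_drop i l, List.drop_eq_getElem_cons hi,
        List.getElem_idxOf hi]
    rw [stackSort_of_ne_nil (List.cons_ne_nil x xs)]
    refine ((ihL.append ihR).append_right _).trans ?_
    rw [List.append_assoc]
    exact ((List.perm_append_singleton _ _).append_left _).trans (List.Perm.of_eq hsplit)

lemma exists_stackSort_eq_append {l : List ℕ} {m : ℕ} (hm : m ∈ l) (h : ∀ a ∈ l, a ≤ m) :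
    ∃ γ, stackSort l = γ ++ [m] := by
  rw [stackSort_of_ne_nil (List.ne_nil_of_mem hm), listMax_eq_of_mem hm h]
  exact ⟨_, rfl⟩

lemma stackSort_append_cons {x y : List ℕ} {m : ℕ} (hx : ∀ a ∈ x, a < m)
    (hy : ∀ a ∈ y, a ≤ m) : stackSort (x ++ m :: y) = stackSort x ++ stackSort y ++ [m] := by
  have hmax : listMax (x ++ m :: y) = m := by
    refine listMax_eq_of_mem (by simp) fun a ha => ?_
    rcases List.mem_append.mp ha with ha | ha
    · exact (hx a ha).le
    · rcases List.mem_cons.mp ha with rfl | ha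
      exacts [le_rfl, hy a ha]
  have hidx : (x ++ m :: y).idxOf m = x.length := by
    rw [List.idxOf_append_of_notMem fun hm => (hx m hm).false, List.idxOf_cons_self]
    rfl
  have hdrop : (x ++ m :: y).drop (x.length + 1) = y := by simp
  rw [stackSort_of_ne_nil (by simp), hmax, hidx, List.take_left, hdrop]

lemma stackSort_append_singleton {x : List ℕ} {m : ℕ} (hx : ∀ a ∈ x, a < m) :
    stackSort (x ++ [m]) = stackSort x ++ [m] := by
  simpa [stackSort.eq_1] using stackSort_append_cons hx (y := []) (by simp)

lemma stackSort_singleton (a : ℕ) : stackSort [a] = [a] := by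
  simpa [stackSort.eq_1] using stackSort_append_singleton (x := []) (m := a) (by simp)

lemma stackSort_append_pair {x : List ℕ} {m c : ℕ} (hx : ∀ a ∈ x, a < m) (hc : c < m) :
    stackSort (x ++ [m, c]) = stackSort x ++ [c, m] := by
  simpa [stackSort_singleton] using stackSort_append_cons hx (y := [c]) (by simpa using hc.le)

lemma stackSort_iterate_append_singleton {m : ℕ} (k : ℕ) {x : List ℕ} (hx : ∀ a ∈ x, a < m) :
    stackSort^[k] (x ++ [m]) = stackSort^[k] x ++ [m] := by
  induction k generalizing x with
  | zero => rfl
  | succ k ih =>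
    rw [Function.iterate_succ_apply, Function.iterate_succ_apply, stackSort_append_singleton hx]
    exact ih fun a ha => hx a ((stackSort_perm x).subset ha)

lemma stackSort_range' (s n : ℕ) : stackSort (List.range' s n) = List.range' s n := by
  induction n with
  | zero => exact stackSort.eq_1
  | succ n ih =>
    rw [List.range'_concat, stackSort_append_singleton, ih]
    intro a ha
    rw [List.mem_range'] at ha
    omega

lemma append_pair_ne_range' (β : List ℕ) {m c : ℕ} (hc : c ≠ m) :
    β ++ [m, c] ≠ List.range' 1 m := fun h => by
  simpa [List.getLast?_range', hc] using congrArg List.getLast? h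

lemma ssc_eq_of_forall_iterate_iff {π : List ℕ} {c : ℕ}
    (h : ∀ k, stackSort^[k] π = List.range' 1 π.length ↔ c ≤ k) : ssc π = c := by
  rw [ssc, show {k | stackSort^[k] π = List.range' 1 π.length} = Set.Ici c from Set.ext h,
    csInf_Ici]

section IsPermWord

variable {n m c : ℕ} {π β : List ℕ}

lemma IsPermWord.mem_iff (h : IsPermWord n π) {a : ℕ} : a ∈ π ↔ 1 ≤ a ∧ a ≤ n := by
  rw [List.Perm.mem_iff h, List.mem_range'_1]
  omega

lemma IsPermWord.length_eq (h : IsPermWord n π) : π.length = n := by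
  simpa using List.Perm.length_eq h

lemma isPermWord_stackSort (h : IsPermWord n π) : IsPermWord n (stackSort π) :=
  (stackSort_perm π).trans h

lemma IsPermWord.of_append_singleton (h : IsPermWord (m + 1) (β ++ [m + 1])) :
    IsPermWord m β := by
  rw [IsPermWord, List.range'_concat, Nat.one_mul, Nat.add_comm] at h
  exact (List.perm_append_right_iff _).mp h

lemma IsPermWord.of_append_pair (h : IsPermWord (m + 1) (β ++ [m + 1, c])) :
    IsPermWord m (β ++ [c]) :=
  .of_append_singleton <| .trans (by simpa using (List.Perm.swap (m + 1) c []).append_left β) h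

lemma stackSort_append_pair_of_isPermWord (h : IsPermWord (m + 1) (β ++ [m + 1, c])) :
    stackSort (β ++ [m + 1, c]) = stackSort β ++ [c, m + 1] := by
  have hβc := h.of_append_pair
  refine stackSort_append_pair (fun a ha => ?_) ?_
  · exact Nat.lt_succ_of_le (hβc.mem_iff.mp (List.mem_append_left _ ha)).2
  · exact Nat.lt_succ_of_le (hβc.mem_iff.mp (by simp)).2

lemma stackSort_eq_of_isPermWord_two (h : IsPermWord 2 β) : stackSort β = [1, 2] := by
  obtain ⟨γ, hγ⟩ := exists_stackSort_eq_append (h.mem_iff.mpr (by simp))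
    fun a ha => (h.mem_iff.mp ha).2
  have : IsPermWord 1 γ := (hγ ▸ isPermWord_stackSort h).of_append_singleton
  rw [hγ, List.perm_singleton.mp this]
  rfl

end IsPermWord

theorem stackSort_iterate_append_three_eq_range'_iff {m : ℕ} (hm : 4 ≤ m) {β : List ℕ}
    (h : IsPermWord m (β ++ [m, 3])) (k : ℕ) :
    stackSort^[k] (β ++ [m, 3]) = List.range' 1 m ↔ m - 3 ≤ k := by
  induction m, hm using Nat.le_induction generalizing β k with
  | base =>
    cases k with
    | zero => exact iff_of_false (append_pair_ne_range' β (by decide)) (by decide)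
    | succ k =>
      rw [Function.iterate_succ_apply, stackSort_append_pair_of_isPermWord h,
        stackSort_eq_of_isPermWord_two h.of_append_pair.of_append_singleton,
        show [1, 2] ++ [3, 4] = List.range' 1 4 from rfl,
        Function.iterate_fixed (stackSort_range' 1 4)]
      simp
  | succ m hm ih =>
    cases k with
    | zero => exact iff_of_false (append_pair_ne_range' β (by omega)) (by omega)
    | succ k =>
      have hβ3 := h.of_append_pair
      obtain ⟨γ, hγ⟩ : ∃ γ, stackSort β = γ ++ [m] :=
        exists_stackSort_eq_append
          ((List.mem_append.mp (hβ3.mem_iff.mpr ⟨by omega, le_rfl⟩)).resolve_right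
            (List.mem_singleton.not.mpr (by omega)))
          fun a ha => (hβ3.mem_iff.mp (List.mem_append_left _ ha)).2
      have hγ3 : IsPermWord m (γ ++ [m, 3]) := by
        have := ((stackSort_perm β).append_right [3]).trans hβ3
        rwa [hγ, List.append_assoc, List.singleton_append] at this
      have hSπ : stackSort (β ++ [m + 1, 3]) = γ ++ [m, 3] ++ [m + 1] := by
        rw [stackSort_append_pair_of_isPermWord h, hγ]
        simp
      rw [Function.iterate_succ_apply, hSπ, stackSort_iterate_append_singleton k
        fun a ha => Nat.lt_succ_of_le (hγ3.mem_iff.mp ha).2, List.range'_concat,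
        show 1 + 1 * m = m + 1 by omega, List.append_left_inj, ih hγ3]
      omega

/-- For all `n ≥ 6`, every permutation `π` of `{1,…,n}` ending with the suffix
`n, 3` satisfies `ssc(π) = n−3`. -/
theorem ssc_of_suffix_n_three (n : ℕ) (hn : 6 ≤ n) (π : List ℕ) (hπ : IsPermWord n π)
    (h : ∃ w : List ℕ, π = w ++ [n, 3]) : ssc π = n - 3 := by
  obtain ⟨w, rfl⟩ := h
  refine ssc_eq_of_forall_iterate_iff fun k => ?_
  rw [hπ.length_eq]
  exact stackSort_iterate_append_three_eq_range'_iff (by omega) hπ k
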